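/- The determinant of a k×k lower Hessenberg matrix with entries c_{i,j} (where c_{i,i+1} denotes the negative of the superdiagonal entry and c_{i,j} the entry itself for j ≤ i) equals the sum over all 2^{k-1} arrays r ∈ {0,1}^k with r_k = 1 of the products ∏_{i=1}^k c_{i, z_i(r)}, where z_i(r) = i - ζ_i(r) and ζ_i(r) = -1 if r_i = 0, and otherwise ζ_i(r) is the number of consecutive zeros immediately preceding position i in r. -/

import Mathlib

/-- Entries of the modified Hessenberg matrix (1-indexed): the superdiagonal entry is
negated, all other entries are kept. -/
def cEnt (h : ℕ → ℕ → ℂ) (i j : ℕ) : ℂ := if j = i + 1 then -h i j else h i j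

/-- `ζ_i(r)` (1-indexed): `-1` if `r i = 0`; otherwise the number of consecutive zeros
immediately preceding position `i` in `r`. -/
def zetaFn (r : ℕ → ℕ) (i : ℕ) : ℤ :=
  if r i = 0 then -1
  else ((Finset.Ico 1 i).filter (fun m => ∀ m', m ≤ m' → m' < i → r m' = 0)).card

/-- `z_i(r) = i - ζ_i(r)`. -/
def zFn (r : ℕ → ℕ) (i : ℕ) : ℤ := (i : ℤ) - zetaFn r i

/-- Extend a 0-1 array `r : Fin k → Fin 2` to a 1-indexed function `ℕ → ℕ`. -/
def extFn (k : ℕ) (r : Fin k → Fin 2) (m : ℕ) : ℕ :=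
  if hm : 1 ≤ m ∧ m ≤ k then (r ⟨m - 1, by omega⟩ : ℕ) else 0

lemma neg_one_le_zeta (f : ℕ → ℕ) (j : ℕ) : -1 ≤ zetaFn f j := by
  unfold zetaFn; split <;> omega

lemma zeta_le (f : ℕ → ℕ) (j : ℕ) (hj : 1 ≤ j) : zetaFn f j ≤ (j : ℤ) - 1 := by
  unfold zetaFn; split
  · omega
  · have := Finset.card_filter_le (Finset.Ico 1 j)
      (fun m => ∀ m', m ≤ m' → m' < j → f m' = 0)
    rw [Nat.card_Ico] at this
    omega

lemma zeta_shift_one (e e' : ℕ → ℕ) (i : ℕ) (hi : 2 ≤ i)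
    (hs : ∀ m, 1 ≤ m → m < i → e' m = e (m + 1)) (h1 : e 1 ≠ 0) :
    zetaFn e i = zetaFn e' (i - 1) := by
  have hei : e i = e' (i - 1) := by
    rw [hs (i - 1) (by omega) (by omega)]; congr 1; omega
  unfold zetaFn
  rw [hei]
  split
  · rfl
  · congr 1
    refine Finset.card_nbij' (· - 1) (· + 1) ?_ ?_ ?_ ?_
    · intro m hm
      simp only [Finset.mem_coe, Finset.mem_filter, Finset.mem_Ico] at *
      have hm2 : 2 ≤ m := by
        by_contra hc
        have h1' : m = 1 := by omega
        subst h1'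
        exact h1 (hm.2 1 (by omega) (by omega))
      refine ⟨⟨by omega, by omega⟩, ?_⟩
      intro m' h1m h2m
      rw [hs m' (by omega) (by omega)]
      exact hm.2 (m' + 1) (by omega) (by omega)
    · intro m hm
      simp only [Finset.mem_coe, Finset.mem_filter, Finset.mem_Ico] at *
      refine ⟨⟨by omega, by omega⟩, ?_⟩
      intro m' h1m h2m
      have h3 : e' (m' - 1) = 0 := hm.2 (m' - 1) (by omega) (by omega)
      rw [hs (m' - 1) (by omega) (by omega)] at h3
      convert h3 using 2; omega
    · intro m hm
      simp only [Finset.mem_coe, Finset.mem_filter, Finset.mem_Ico] at hm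
      have hm2 : 2 ≤ m := by
        by_contra hc
        have h1' : m = 1 := by omega
        subst h1'
        exact h1 (hm.2 1 (by omega) (by omega))
      dsimp only; omega
    · intro m hm; dsimp only; omega

lemma zeta_shift_zero_full (e e' : ℕ → ℕ) (i : ℕ) (hi : 2 ≤ i)
    (hs : ∀ m, 1 ≤ m → m < i → e' m = e (m + 1)) (h1 : e 1 = 0)
    (hz : zetaFn e' (i - 1) = (i : ℤ) - 2) :
    zetaFn e i = (i : ℤ) - 1 := by
  have hei : e i = e' (i - 1) := by
    rw [hs (i - 1) (by omega) (by omega)]; congr 1; omega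
  have hne : e' (i - 1) ≠ 0 := by
    intro hc
    rw [zetaFn, if_pos hc] at hz; omega
  -- all of e' on [1, i-2] is zero
  have hall' : ∀ m', 1 ≤ m' → m' < i - 1 → e' m' = 0 := by
    rw [zetaFn, if_neg hne] at hz
    set F := (Finset.Ico 1 (i-1)).filter (fun m => ∀ m', m ≤ m' → m' < i - 1 → e' m' = 0) with hF
    have hsub : F ⊆ Finset.Ico 1 (i-1) := Finset.filter_subset _ _
    have hcard : (Finset.Ico 1 (i-1)).card ≤ F.card := by
      rw [Nat.card_Ico]; omega
    have heq : F = Finset.Ico 1 (i-1) := Finset.eq_of_subset_of_card_le hsub hcard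
    intro m' h1m h2m
    have h1F : (1 : ℕ) ∈ F := by rw [heq]; simp [Finset.mem_Ico]; omega
    rw [hF, Finset.mem_filter] at h1F
    exact h1F.2 m' (by omega) h2m
  have hall : ∀ m', 1 ≤ m' → m' < i → e m' = 0 := by
    intro m' h1m h2m
    rcases Nat.eq_or_lt_of_le h1m with h | h
    · rw [← h]; exact h1
    · have := hall' (m' - 1) (by omega) (by omega)
      rw [hs (m' - 1) (by omega) (by omega)] at this
      convert this using 2; omega
  rw [zetaFn, if_neg (by rw [hei]; exact hne)]
  have : (Finset.Ico 1 i).filter (fun m => ∀ m', m ≤ m' → m' < i → e m' = 0)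
      = Finset.Ico 1 i := by
    apply Finset.eq_of_subset_of_card_le (Finset.filter_subset _ _)
    apply Finset.card_le_card
    intro m hm
    rw [Finset.mem_filter]
    exact ⟨hm, fun m' h1m h2m => hall m' (le_trans (Finset.mem_Ico.1 hm).1 h1m) h2m⟩
  rw [this, Nat.card_Ico]; omega

lemma zeta_shift_zero (e e' : ℕ → ℕ) (i : ℕ) (hi : 2 ≤ i)
    (hs : ∀ m, 1 ≤ m → m < i → e' m = e (m + 1)) (h1 : e 1 = 0)
    (hz : zetaFn e' (i - 1) ≠ (i : ℤ) - 2) :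
    zetaFn e i = zetaFn e' (i - 1) := by
  have hei : e i = e' (i - 1) := by
    rw [hs (i - 1) (by omega) (by omega)]; congr 1; omega
  unfold zetaFn
  rw [hei]
  split
  · rfl
  · rename_i hne
    -- 1 is not in the filter, else zetaFn e' (i-1) = i - 2
    have hone : ¬ (∀ m', 1 ≤ m' → m' < i → e m' = 0) := by
      intro hc
      apply hz
      rw [zetaFn, if_neg hne]
      have : (Finset.Ico 1 (i-1)).filter (fun m => ∀ m', m ≤ m' → m' < i - 1 → e' m' = 0)
          = Finset.Ico 1 (i-1) := by
        apply Finset.eq_of_subset_of_card_le (Finset.filter_subset _ _)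
        apply Finset.card_le_card
        intro m hm
        rw [Finset.mem_filter]
        refine ⟨hm, fun m' h1m h2m => ?_⟩
        rw [hs m' (le_trans (Finset.mem_Ico.1 hm).1 h1m) (by omega)]
        exact hc (m' + 1) (by omega) (by omega)
      rw [this, Nat.card_Ico]; omega
    congr 1
    refine Finset.card_nbij' (· - 1) (· + 1) ?_ ?_ ?_ ?_
    · intro m hm
      simp only [Finset.mem_coe, Finset.mem_filter, Finset.mem_Ico] at *
      have hm2 : 2 ≤ m := by
        by_contra hc
        have h1' : m = 1 := by omega
        subst h1'
        exact hone hm.2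
      refine ⟨⟨by omega, by omega⟩, ?_⟩
      intro m' h1m h2m
      rw [hs m' (by omega) (by omega)]
      exact hm.2 (m' + 1) (by omega) (by omega)
    · intro m hm
      simp only [Finset.mem_coe, Finset.mem_filter, Finset.mem_Ico] at *
      refine ⟨⟨by omega, by omega⟩, ?_⟩
      intro m' h1m h2m
      have h3 : e' (m' - 1) = 0 := hm.2 (m' - 1) (by omega) (by omega)
      rw [hs (m' - 1) (by omega) (by omega)] at h3
      convert h3 using 2; omega
    · intro m hm
      simp only [Finset.mem_coe, Finset.mem_filter, Finset.mem_Ico] at hm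
      have hm2 : 2 ≤ m := by
        by_contra hc
        have h1' : m = 1 := by omega
        subst h1'
        exact hone hm.2
      dsimp only; omega
    · intro m hm; dsimp only; omega

lemma zfn_bounds (f : ℕ → ℕ) (j : ℕ) (hj : 1 ≤ j) :
    1 ≤ zFn f j ∧ zFn f j ≤ (j : ℤ) + 1 := by
  have h1 := neg_one_le_zeta f j
  have h2 := zeta_le f j hj
  unfold zFn; omega

lemma cEnt_shift_one (h : ℕ → ℕ → ℂ) (e e' : ℕ → ℕ) (i : ℕ) (hi : 2 ≤ i)
    (hs : ∀ m, 1 ≤ m → m < i → e' m = e (m + 1)) (h1 : e 1 ≠ 0) :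
    cEnt h i (zFn e i).toNat
      = cEnt (fun a b => h (a + 1) (b + 1)) (i - 1) (zFn e' (i - 1)).toNat := by
  have hzeta := zeta_shift_one e e' i hi hs h1
  have hb := zfn_bounds e' (i - 1) (by omega)
  have hz : zFn e i = zFn e' (i - 1) + 1 := by
    unfold zFn at *; rw [hzeta]; push_cast; omega
  set t := (zFn e' (i - 1)).toNat with ht
  have ht1 : 1 ≤ t := by omega
  have htn : (zFn e i).toNat = t + 1 := by omega
  rw [htn]
  unfold cEnt
  have hiff : (t + 1 = i + 1) ↔ (t = i - 1 + 1) := by omega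
  have hval : h i (t + 1) = h (i - 1 + 1) (t + 1) := by congr 1; omega
  split <;> split <;> simp_all <;> omega

lemma cEnt_shift_zero (h : ℕ → ℕ → ℂ) (e e' : ℕ → ℕ) (i : ℕ) (hi : 2 ≤ i)
    (hs : ∀ m, 1 ≤ m → m < i → e' m = e (m + 1)) (h1 : e 1 = 0) :
    cEnt h i (zFn e i).toNat
      = cEnt (fun a b => h (a + 1) (if b = 1 then 1 else b + 1)) (i - 1)
          (zFn e' (i - 1)).toNat := by
  have hb := zfn_bounds e' (i - 1) (by omega)
  by_cases hz : zetaFn e' (i - 1) = (i : ℤ) - 2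
  · have hzeta := zeta_shift_zero_full e e' i hi hs h1 hz
    have hz1 : zFn e i = 1 := by unfold zFn; omega
    have hz2 : zFn e' (i - 1) = 1 := by unfold zFn; push_cast; omega
    rw [hz1, hz2]
    unfold cEnt
    rw [if_neg (by omega), if_neg (by omega)]
    norm_num
    congr 1; omega
  · have hzeta := zeta_shift_zero e e' i hi hs h1 hz
    have hz2 : 2 ≤ zFn e' (i - 1) := by
      unfold zFn at *
      have := neg_one_le_zeta e' (i - 1)
      have := zeta_le e' (i - 1) (by omega)
      push_cast at *
      omega
    have hzrel : zFn e i = zFn e' (i - 1) + 1 := by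
      unfold zFn at *; rw [hzeta]; push_cast; omega
    set t := (zFn e' (i - 1)).toNat with ht
    have ht1 : 2 ≤ t := by omega
    have htn : (zFn e i).toNat = t + 1 := by omega
    rw [htn]
    unfold cEnt
    have hiff : (t + 1 = i + 1) ↔ (t = i - 1 + 1) := by omega
    simp only
    rw [if_neg (by omega : ¬ t = 1)]
    have hval : h i (t + 1) = h (i - 1 + 1) (t + 1) := by congr 1; omega
    split <;> split <;> simp_all <;> omega

lemma extFn_cons_one (k : ℕ) (a : Fin 2) (s : Fin k → Fin 2) :
    extFn (k + 1) (Fin.cons a s) 1 = (a : ℕ) := by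
  unfold extFn
  rw [dif_pos ⟨le_refl 1, by omega⟩]
  have h0 : (⟨1 - 1, by omega⟩ : Fin (k + 1)) = 0 := by ext; simp
  rw [h0, Fin.cons_zero]

lemma extFn_cons_shift (k : ℕ) (a : Fin 2) (s : Fin k → Fin 2) (m : ℕ)
    (h1 : 1 ≤ m) (h2 : m ≤ k) :
    extFn k s m = extFn (k + 1) (Fin.cons a s) (m + 1) := by
  unfold extFn
  rw [dif_pos ⟨h1, h2⟩, dif_pos ⟨by omega, by omega⟩]
  have : (⟨m + 1 - 1, by omega⟩ : Fin (k + 1)) = Fin.succ ⟨m - 1, by omega⟩ := by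
    ext; simp; omega
  rw [this, Fin.cons_succ]

lemma factor_one_of (h : ℕ → ℕ → ℂ) (k : ℕ) (a : Fin 2) (s : Fin k → Fin 2) :
    cEnt h 1 ((zFn (extFn (k + 1) (Fin.cons a s)) 1).toNat)
      = if (a : ℕ) = 0 then -h 1 2 else h 1 1 := by
  have he : extFn (k + 1) (Fin.cons a s) 1 = (a : ℕ) := extFn_cons_one k a s
  by_cases ha : (a : ℕ) = 0
  · have hz : zetaFn (extFn (k + 1) (Fin.cons a s)) 1 = -1 := by
      rw [zetaFn, if_pos (by rw [he, ha])]
    rw [if_pos ha, zFn, hz, show ((1:ℕ):ℤ) - -1 = 2 from by norm_num,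
      show Int.toNat 2 = 2 from rfl, cEnt, if_pos rfl]
  · have hz : zetaFn (extFn (k + 1) (Fin.cons a s)) 1 = 0 := by
      rw [zetaFn, if_neg (by rw [he]; exact ha)]
      simp
    rw [if_neg ha, zFn, hz, show ((1:ℕ):ℤ) - 0 = 1 from by norm_num,
      show Int.toNat 1 = 1 from rfl, cEnt, if_neg (by omega)]

lemma prod_cons_one (h : ℕ → ℕ → ℂ) (n : ℕ) (s : Fin n → Fin 2) :
    (∏ i ∈ Finset.Icc 1 (n + 1), cEnt h i ((zFn (extFn (n + 1) (Fin.cons 1 s)) i).toNat))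
    = h 1 1 * ∏ i ∈ Finset.Icc 1 n,
        cEnt (fun a b => h (a + 1) (b + 1)) i ((zFn (extFn n s) i).toNat) := by
  rw [← Finset.Ico_add_one_right_eq_Icc, ← Finset.Ico_add_one_right_eq_Icc,
    Finset.prod_eq_prod_Ico_succ_bot (by omega : (1:ℕ) < n + 1 + 1)]
  have h1 : cEnt h 1 ((zFn (extFn (n + 1) (Fin.cons 1 s)) 1).toNat) = h 1 1 := by
    rw [factor_one_of h n 1 s]; norm_num
  rw [h1]
  congr 1
  rw [Finset.prod_Ico_eq_prod_range, Finset.prod_Ico_eq_prod_range]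
  have hcard : n + 1 + 1 - (1 + 1) = n + 1 - 1 := by omega
  rw [hcard]
  apply Finset.prod_congr rfl
  intro i hi
  rw [Finset.mem_range] at hi
  have := cEnt_shift_one h (extFn (n + 1) (Fin.cons 1 s)) (extFn n s) (1 + 1 + i)
    (by omega)
    (fun m' hm1 hm2 => extFn_cons_shift n 1 s m' hm1 (by omega))
    (by rw [extFn_cons_one]; norm_num)
  rw [show 1 + 1 + i - 1 = 1 + i by omega] at this
  exact this

lemma prod_cons_zero (h : ℕ → ℕ → ℂ) (n : ℕ) (s : Fin n → Fin 2) :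
    (∏ i ∈ Finset.Icc 1 (n + 1), cEnt h i ((zFn (extFn (n + 1) (Fin.cons 0 s)) i).toNat))
    = (-h 1 2) * ∏ i ∈ Finset.Icc 1 n,
        cEnt (fun a b => h (a + 1) (if b = 1 then 1 else b + 1)) i
          ((zFn (extFn n s) i).toNat) := by
  rw [← Finset.Ico_add_one_right_eq_Icc, ← Finset.Ico_add_one_right_eq_Icc,
    Finset.prod_eq_prod_Ico_succ_bot (by omega : (1:ℕ) < n + 1 + 1)]
  have h1 : cEnt h 1 ((zFn (extFn (n + 1) (Fin.cons 0 s)) 1).toNat) = -h 1 2 := by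
    rw [factor_one_of h n 0 s]; norm_num
  rw [h1]
  congr 1
  rw [Finset.prod_Ico_eq_prod_range, Finset.prod_Ico_eq_prod_range]
  have hcard : n + 1 + 1 - (1 + 1) = n + 1 - 1 := by omega
  rw [hcard]
  apply Finset.prod_congr rfl
  intro i hi
  rw [Finset.mem_range] at hi
  have := cEnt_shift_zero h (extFn (n + 1) (Fin.cons 0 s)) (extFn n s) (1 + 1 + i)
    (by omega)
    (fun m' hm1 hm2 => extFn_cons_shift n 0 s m' hm1 (by omega))
    (by rw [extFn_cons_one]; norm_num)
  rw [show 1 + 1 + i - 1 = 1 + i by omega] at this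
  exact this

lemma main_lemma (k : ℕ) (hk : 1 ≤ k) (h : ℕ → ℕ → ℂ)
    (hH : ∀ i j : ℕ, i + 1 < j → h i j = 0) :
    (Matrix.of fun i j : Fin k => h ((i : ℕ) + 1) ((j : ℕ) + 1)).det =
      ∑ r ∈ Finset.univ.filter (fun r : Fin k → Fin 2 => r ⟨k - 1, Nat.sub_lt hk Nat.one_pos⟩ = 1),
        ∏ i ∈ Finset.Icc 1 k, cEnt h i ((zFn (extFn k r) i).toNat) := by
  induction k, hk using Nat.le_induction generalizing h with
  | base =>
    have hfil : Finset.univ.filter (fun r : Fin 1 → Fin 2 => r ⟨1 - 1, by omega⟩ = 1)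
        = {fun _ => 1} := by decide
    rw [hfil, Finset.sum_singleton, Matrix.det_fin_one, Finset.Icc_self,
      Finset.prod_singleton]
    have he : extFn 1 (fun _ => (1 : Fin 2)) 1 = 1 := by
      unfold extFn; rw [dif_pos ⟨le_refl 1, le_refl 1⟩]; rfl
    have hz : zetaFn (extFn 1 (fun _ => (1 : Fin 2))) 1 = 0 := by
      rw [zetaFn, if_neg (by rw [he]; omega)]
      simp
    rw [zFn, hz, show ((1:ℕ):ℤ) - 0 = 1 from by norm_num,
      show Int.toNat 1 = 1 from rfl, cEnt, if_neg (by omega)]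
    rfl
  | succ k hk ih =>
    obtain ⟨m, rfl⟩ : ∃ m, k = m + 1 := ⟨k - 1, by omega⟩
    set h1f : ℕ → ℕ → ℂ := fun a b => h (a + 1) (b + 1) with hh1
    set h0f : ℕ → ℕ → ℂ := fun a b => h (a + 1) (if b = 1 then 1 else b + 1) with hh0
    have hH1 : ∀ i j, i + 1 < j → h1f i j = 0 := fun i j hij => hH _ _ (by omega)
    have hH0 : ∀ i j, i + 1 < j → h0f i j = 0 := by
      intro i j hij
      simp only [hh0]
      rw [if_neg (by omega)]
      exact hH _ _ (by omega)
    set M : Matrix (Fin (m + 2)) (Fin (m + 2)) ℂ :=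
      Matrix.of fun i j : Fin (m + 2) => h ((i : ℕ) + 1) ((j : ℕ) + 1) with hM
    -- identify the two minors
    have hA : M.submatrix Fin.succ ((0 : Fin (m + 2)).succAbove)
        = Matrix.of fun i j : Fin (m + 1) => h1f ((i : ℕ) + 1) ((j : ℕ) + 1) := by
      ext i j
      simp [hM, hh1, Fin.succAbove_zero, Matrix.submatrix_apply]
    have hB : M.submatrix Fin.succ ((1 : Fin (m + 2)).succAbove)
        = Matrix.of fun i j : Fin (m + 1) => h0f ((i : ℕ) + 1) ((j : ℕ) + 1) := by
      ext i j
      simp only [Matrix.submatrix_apply, hM, Matrix.of_apply, hh0]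
      have hco : (((1 : Fin (m + 2)).succAbove j : Fin (m + 2)) : ℕ)
          = if (j : ℕ) = 0 then 0 else (j : ℕ) + 1 := by
        rw [Fin.succAbove]
        split
        · rename_i hlt
          rw [Fin.lt_def] at hlt
          simp only [Fin.coe_castSucc] at hlt
          have : ((1 : Fin (m + 2)) : ℕ) = 1 := rfl
          rw [this] at hlt
          rw [if_pos (by omega)]
          simp only [Fin.coe_castSucc]
          omega
        · rename_i hlt
          rw [Fin.lt_def] at hlt
          simp only [Fin.coe_castSucc] at hlt
          have : ((1 : Fin (m + 2)) : ℕ) = 1 := rfl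
          rw [this] at hlt
          rw [if_neg (by omega)]
          simp only [Fin.val_succ]
      rw [hco]
      rcases Nat.eq_zero_or_pos (j : ℕ) with hj | hj
      · rw [if_pos hj, if_pos (by omega), Fin.val_succ]
      · rw [if_neg (by omega), if_neg (by omega), Fin.val_succ]
    -- Laplace expansion along row 0
    have hdet : M.det =
        h 1 1 * (Matrix.of fun i j : Fin (m + 1) => h1f ((i : ℕ) + 1) ((j : ℕ) + 1)).det
        - h 1 2 * (Matrix.of fun i j : Fin (m + 1) => h0f ((i : ℕ) + 1) ((j : ℕ) + 1)).det := by
      rw [Matrix.det_succ_row_zero, Fin.sum_univ_succ, Fin.sum_univ_succ]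
      have htail : ∀ j : Fin m,
          (-1 : ℂ) ^ ((((j.succ : Fin (m + 1)).succ : Fin (m + 2))) : ℕ)
            * M 0 ((j.succ : Fin (m + 1)).succ)
            * (M.submatrix Fin.succ ((j.succ : Fin (m + 1)).succ).succAbove).det = 0 := by
        intro j
        have hzero : M 0 ((j.succ : Fin (m + 1)).succ) = 0 := by
          show h _ _ = 0
          apply hH
          simp [Fin.val_succ]
        rw [hzero]
        ring
      rw [Finset.sum_congr rfl (fun j _ => htail j), Finset.sum_const_zero, add_zero]
      have h00 : M 0 0 = h 1 1 := rfl
      have h01 : M 0 ((0 : Fin (m + 1)).succ) = h 1 2 := rfl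
      rw [h00, h01, hA]
      have hsA : ((0 : Fin (m + 1)).succ : Fin (m + 2)) = (1 : Fin (m + 2)) := rfl
      rw [hsA, hB]
      norm_num
      ring
    rw [hdet, ih h1f hH1, ih h0f hH0]
    -- now the RHS side
    have hidx : (⟨m + 1 + 1 - 1, by omega⟩ : Fin (m + 2)) = Fin.succ ⟨m + 1 - 1, by omega⟩ := by
      ext; simp
    have hcons : ∀ (a : Fin 2) (s : Fin (m + 1) → Fin 2),
        (Fin.consEquiv (fun _ : Fin (m + 1 + 1) => Fin 2)) (a, s) = Fin.cons a s := fun _ _ => rfl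
    conv_rhs =>
      rw [Finset.sum_filter,
        ← Equiv.sum_comp (Fin.consEquiv (fun _ : Fin (m + 1 + 1) => Fin 2)),
        Fintype.sum_prod_type, Fin.sum_univ_two]
      simp only [hcons, hidx, Fin.cons_succ]
      rw [← Finset.sum_filter, ← Finset.sum_filter]
    have hsum0 : (∑ s ∈ Finset.univ.filter
          (fun s : Fin (m + 1) → Fin 2 => s ⟨m + 1 - 1, by omega⟩ = 1),
        ∏ i ∈ Finset.Icc 1 (m + 1 + 1),
          cEnt h i ((zFn (extFn (m + 1 + 1) (Fin.cons 0 s)) i).toNat))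
        = (-h 1 2) * ∑ s ∈ Finset.univ.filter
            (fun s : Fin (m + 1) → Fin 2 => s ⟨m + 1 - 1, by omega⟩ = 1),
          ∏ i ∈ Finset.Icc 1 (m + 1), cEnt h0f i ((zFn (extFn (m + 1) s) i).toNat) := by
      rw [Finset.mul_sum]
      apply Finset.sum_congr rfl
      intro s _
      exact prod_cons_zero h (m + 1) s
    have hsum1 : (∑ s ∈ Finset.univ.filter
          (fun s : Fin (m + 1) → Fin 2 => s ⟨m + 1 - 1, by omega⟩ = 1),
        ∏ i ∈ Finset.Icc 1 (m + 1 + 1),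
          cEnt h i ((zFn (extFn (m + 1 + 1) (Fin.cons 1 s)) i).toNat))
        = h 1 1 * ∑ s ∈ Finset.univ.filter
            (fun s : Fin (m + 1) → Fin 2 => s ⟨m + 1 - 1, by omega⟩ = 1),
          ∏ i ∈ Finset.Icc 1 (m + 1), cEnt h1f i ((zFn (extFn (m + 1) s) i).toNat) := by
      rw [Finset.mul_sum]
      apply Finset.sum_congr rfl
      intro s _
      exact prod_cons_one h (m + 1) s
    rw [hsum0, hsum1]
    ring

/-- The determinant of a `k × k` lower Hessenberg matrix (entries `h` 1-indexed, with
`h i j = 0` for `j > i + 1`) equals the sum over all `2^(k-1)` 0-1 arrays `r` of length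
`k` with last component `1` of the products `∏_{i=1}^k c_{i, z_i(r)}`, where
`c_{i,j}` is `h i j` with the superdiagonal negated. -/
theorem stmt8 (k : ℕ) (hk : 1 ≤ k) (h : ℕ → ℕ → ℂ)
    (hH : ∀ i j : ℕ, i + 1 < j → h i j = 0) :
    (Matrix.of fun i j : Fin k => h ((i : ℕ) + 1) ((j : ℕ) + 1)).det =
      ∑ r ∈ Finset.univ.filter (fun r : Fin k → Fin 2 => r ⟨k - 1, by omega⟩ = 1),
        ∏ i ∈ Finset.Icc 1 k, cEnt h i ((zFn (extFn k r) i).toNat) := main_lemma k hk h hH
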